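/- The maximum number of edges of an S_{2,2}-free subgraph of Q_3 is exactly 9, i.e., ex(Q_3, S_{2,2}) = 9. -/

import Mathlib

open SimpleGraph

/-- The `n`-dimensional hypercube: vertices are `{0,1}^n`, adjacent iff they
differ in exactly one coordinate (Hamming distance 1). -/
def cube (n : ℕ) : SimpleGraph (Fin n → Bool) where
  Adj x y := hammingDist x y = 1
  symm := ⟨fun x y h => by show hammingDist y x = 1; rw [hammingDist_comm]; exact h⟩
  loopless := ⟨fun x h => by simp [hammingDist_self] at h⟩

/-- The double star `S_{k,l}`: an edge `uv` (here `Sum.inl none` and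
`Sum.inr none`) with `k` leaves attached to `u` and `l` further leaves
attached to `v`. -/
def doubleStar (k l : ℕ) : SimpleGraph (Option (Fin k) ⊕ Option (Fin l)) :=
  SimpleGraph.fromRel (fun a b =>
    (a = Sum.inl none ∧ b = Sum.inr none) ∨
    (a = Sum.inl none ∧ ∃ i, b = Sum.inl (some i)) ∨
    (a = Sum.inr none ∧ ∃ j, b = Sum.inr (some j)))

/-- `G` contains `H` as a (not necessarily induced) subgraph. -/
def Contains {α β : Type*} (G : SimpleGraph α) (H : SimpleGraph β) : Prop :=
  ∃ f : β ↪ α, ∀ a b, H.Adj a b → G.Adj (f a) (f b)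

/-- The Turán number of `H` in the hypercube `Q_n`: the maximum number of
edges of an `H`-free subgraph of `Q_n`. -/
noncomputable def exQ (n : ℕ) {β : Type*} (H : SimpleGraph β) : ℕ :=
  sSup {m | ∃ G : SimpleGraph (Fin n → Bool),
    G ≤ cube n ∧ ¬ Contains G H ∧ G.edgeSet.ncard = m}

/-- Number of coordinates equal to `1` (Hamming weight). -/
def wt {n : ℕ} (x : Fin n → Bool) : ℕ := hammingDist x (fun _ => false)

/-! A copy of `S_{2,2}` in a triangle-free graph is nothing but an edge both of whose ends have
degree at least `3`: the four leaves are automatically distinct. Since `Q_3` is bipartite (by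
parity of weight), in an `S_{2,2}`-free subgraph of `Q_3` the vertices of degree `< 3` form a
vertex cover `B`, whence `e ≤ 2|B|`, while counting degrees gives `2e + |B| ≤ 24`; together
`5e ≤ 48`. Deleting a perfect matching of the middle hexagon of `Q_3` leaves `9` edges with only
the two antipodal vertices `000` and `111` of degree `3`. -/

open Finset Function

lemma cast_hammingDist_eq_add {ι : Type*} [Fintype ι] (x y z : ι → Bool) :
    (hammingDist x z : ZMod 2) = hammingDist x y + hammingDist y z := by
  simp only [hammingDist, card_filter, Nat.cast_sum, ← sum_add_distrib]
  refine sum_congr rfl fun i _ => ?_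
  cases x i <;> cases y i <;> cases z i <;> decide

lemma exists_eq_update_of_hammingDist_eq_one {ι : Type*} [Fintype ι] [DecidableEq ι]
    {x y : ι → Bool} (h : hammingDist x y = 1) : ∃ i, y = update x i (!x i) := by
  obtain ⟨i, hi⟩ := card_eq_one.1 h
  refine ⟨i, funext fun j => ?_⟩
  have hj : x j ≠ y j ↔ j = i := by simpa using congrArg (j ∈ ·) hi
  rcases eq_or_ne j i with rfl | hji
  · rw [update_self]
    exact Bool.eq_not.2 (hj.2 rfl).symm
  · rw [update_of_ne hji]
    exact (not_not.1 (mt hj.1 hji)).symm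

instance (n : ℕ) : DecidableRel (cube n).Adj :=
  fun x y => inferInstanceAs (Decidable (hammingDist x y = 1))

theorem cube_colorable_two (n : ℕ) : (cube n).Colorable 2 :=
  ⟨Coloring.mk (fun x => (wt x : ZMod 2)) fun {x y} hxy => by
    rw [wt, wt, cast_hammingDist_eq_add x y, (hxy : hammingDist x y = 1)]
    exact add_ne_right.2 one_ne_zero⟩

theorem cube_cliqueFree_three (n : ℕ) : (cube n).CliqueFree 3 :=
  (cube_colorable_two n).cliqueFree (by norm_num)

theorem cube_degree_le (n : ℕ) (x : Fin n → Bool) : (cube n).degree x ≤ n :=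
  calc (cube n).degree x ≤ #(univ.image fun i => update x i (!x i)) := by
        refine card_le_card fun y hy => ?_
        obtain ⟨i, rfl⟩ :=
          exists_eq_update_of_hammingDist_eq_one ((mem_neighborFinset _ _ _).1 hy)
        exact mem_image_of_mem _ (mem_univ i)
    _ ≤ n := card_image_le.trans (by simp)

section DoubleStar

variable {V : Type*} {G : SimpleGraph V} {k l : ℕ}

lemma doubleStar_adj_inl_none_inr_none : (doubleStar k l).Adj (.inl none) (.inr none) := by
  simp [doubleStar]

lemma doubleStar_adj_inl_none_inl_some (i : Fin k) :
    (doubleStar k l).Adj (.inl none) (.inl (some i)) := by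
  simp [doubleStar]

lemma doubleStar_adj_inr_none_inr_some (j : Fin l) :
    (doubleStar k l).Adj (.inr none) (.inr (some j)) := by
  simp [doubleStar]

lemma contains_doubleStar_of_adj (hG : G.CliqueFree 3) {u v : V} (huv : G.Adj u v)
    (a : Fin k ↪ V) (ha : ∀ i, G.Adj u (a i) ∧ a i ≠ v)
    (b : Fin l ↪ V) (hb : ∀ j, G.Adj v (b j) ∧ b j ≠ u) :
    Contains G (doubleStar k l) := by
  classical
  have hab (i j) : a i ≠ b j := fun h =>
    hG _ (is3Clique_triple_iff.2 ⟨huv, (ha i).1, h ▸ (hb j).1⟩)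
  let a' := a.optionElim u (by rintro ⟨i, hi⟩; exact (ha i).1.ne hi.symm)
  let b' := b.optionElim v (by rintro ⟨j, hj⟩; exact (hb j).1.ne hj.symm)
  refine ⟨⟨Sum.elim a' b', a'.injective.sumElim b'.injective ?_⟩, ?_⟩
  · rintro (_ | i) (_ | j)
    exacts [huv.ne, (hb j).2.symm, (ha i).2, hab i j]
  · suffices ∀ p q, (p = .inl none ∧ q = .inr none) ∨ (p = .inl none ∧ ∃ i, q = .inl (some i)) ∨
        (p = .inr none ∧ ∃ j, q = .inr (some j)) → G.Adj (Sum.elim a' b' p) (Sum.elim a' b' q) by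
      intro p q hpq
      rw [doubleStar, fromRel_adj] at hpq
      exact hpq.2.elim (this p q) fun h => (this q p h).symm
    rintro p q (⟨rfl, rfl⟩ | ⟨rfl, i, rfl⟩ | ⟨rfl, j, rfl⟩)
    exacts [huv, (ha i).1, (hb j).1]

variable [Fintype V] [DecidableRel G.Adj]

lemma card_le_degree_of_embedding {ι : Type*} [Fintype ι] {x : V} (g : ι ↪ V)
    (hadj : ∀ i, G.Adj x (g i)) : Fintype.card ι ≤ G.degree x := by
  simpa using card_le_card_of_injOn g (s := univ) (t := G.neighborFinset x)
    (fun i _ => by simpa using hadj i) g.injective.injOn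

theorem exists_adj_lt_degree_of_contains_doubleStar (h : Contains G (doubleStar k l)) :
    ∃ u v, G.Adj u v ∧ k < G.degree u ∧ l < G.degree v := by
  obtain ⟨f, hf⟩ := h
  refine ⟨f (.inl none), f (.inr none), hf _ _ doubleStar_adj_inl_none_inr_none, ?_, ?_⟩
  · simpa using card_le_degree_of_embedding
      (((Embedding.some.trans Embedding.inl).optionElim (.inr none) (by simp)).trans f)
      (by rintro (_ | i)
          exacts [hf _ _ doubleStar_adj_inl_none_inr_none,
            hf _ _ (doubleStar_adj_inl_none_inl_some i)])
  · simpa using card_le_degree_of_embedding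
      (((Embedding.some.trans Embedding.inr).optionElim (.inl none) (by simp)).trans f)
      (by rintro (_ | j)
          exacts [(hf _ _ doubleStar_adj_inl_none_inr_none).symm,
            hf _ _ (doubleStar_adj_inr_none_inr_some j)])

theorem contains_doubleStar_of_lt_degree (hG : G.CliqueFree 3) {u v : V} (huv : G.Adj u v)
    (hu : k < G.degree u) (hv : l < G.degree v) : Contains G (doubleStar k l) := by
  classical
  obtain ⟨a⟩ : Nonempty (Fin k ↪ (G.neighborFinset u).erase v) :=
    Function.Embedding.nonempty_of_card_le <| by
      rw [Fintype.card_fin, Fintype.card_coe, card_erase_of_mem (by simpa using huv),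
        card_neighborFinset_eq_degree]
      omega
  obtain ⟨b⟩ : Nonempty (Fin l ↪ (G.neighborFinset v).erase u) :=
    Function.Embedding.nonempty_of_card_le <| by
      rw [Fintype.card_fin, Fintype.card_coe, card_erase_of_mem (by simpa using huv.symm),
        card_neighborFinset_eq_degree]
      omega
  refine contains_doubleStar_of_adj hG huv (a.trans (.subtype _)) (fun i => ?_)
    (b.trans (.subtype _)) (fun j => ?_)
  · obtain ⟨hne, hadj⟩ := mem_erase.1 (a i).2
    exact ⟨(mem_neighborFinset _ _ _).1 hadj, hne⟩
  · obtain ⟨hne, hadj⟩ := mem_erase.1 (b j).2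
    exact ⟨(mem_neighborFinset _ _ _).1 hadj, hne⟩

end DoubleStar

section EdgeCount

variable {V : Type*} [Fintype V] {G : SimpleGraph V} [DecidableRel G.Adj]

lemma card_edgeFinset_le_sum_degree {s : Finset V} (hs : G.IsVertexCover s) :
    #G.edgeFinset ≤ ∑ v ∈ s, G.degree v := by
  classical
  calc #G.edgeFinset ≤ #(s.biUnion fun v => G.incidenceFinset v) := card_le_card ?_
    _ ≤ ∑ v ∈ s, #(G.incidenceFinset v) := card_biUnion_le
    _ = ∑ v ∈ s, G.degree v := by simp only [card_incidenceFinset_eq_degree]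
  intro e he
  induction e using Sym2.ind with
  | _ u v =>
    rw [mem_edgeFinset, mem_edgeSet] at he
    rcases hs he with hu | hv
    · exact mem_biUnion.2 ⟨u, hu, (G.mem_incidenceFinset u _).2 ⟨he, Sym2.mem_mk_left u v⟩⟩
    · exact mem_biUnion.2 ⟨v, hv, (G.mem_incidenceFinset v _).2 ⟨he, Sym2.mem_mk_right u v⟩⟩

theorem mul_card_edgeFinset_le_of_degree_le {d : ℕ} (hdeg : ∀ v, G.degree v ≤ d)
    (hcover : G.IsVertexCover {v | G.degree v < d}) :
    (2 * d - 1) * #G.edgeFinset ≤ d * (d - 1) * Fintype.card V := by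
  set B := univ.filter (G.degree · < d)
  have hcov : #G.edgeFinset ≤ (d - 1) * #B := calc
    #G.edgeFinset ≤ ∑ v ∈ B, G.degree v :=
      card_edgeFinset_le_sum_degree (by simpa [B] using hcover)
    _ ≤ ∑ _v ∈ B, (d - 1) := sum_le_sum fun v hv => by have := (mem_filter.1 hv).2; omega
    _ = (d - 1) * #B := by rw [sum_const, smul_eq_mul, mul_comm]
  have hsum : 2 * #G.edgeFinset + #B ≤ d * Fintype.card V := calc
    2 * #G.edgeFinset + #B = ∑ v, (G.degree v + if G.degree v < d then 1 else 0) := by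
      rw [sum_add_distrib, sum_degrees_eq_twice_card_edges, card_filter]
    _ ≤ ∑ _v : V, d := sum_le_sum fun v _ => by have := hdeg v; split_ifs <;> omega
    _ = d * Fintype.card V := by rw [sum_const, smul_eq_mul, card_univ, mul_comm]
  rcases d with _ | c
  · simp
  · rw [Nat.add_sub_cancel] at hcov ⊢
    rw [show 2 * (c + 1) - 1 = 2 * c + 1 by omega]
    nlinarith [Nat.mul_le_mul_left c hsum]

end EdgeCount

theorem mul_card_edgeFinset_le_of_le_cube {n : ℕ} {G : SimpleGraph (Fin n → Bool)}
    [DecidableRel G.Adj] (hG : G ≤ cube n) (hfree : ¬ Contains G (doubleStar (n - 1) (n - 1))) :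
    (2 * n - 1) * #G.edgeFinset ≤ n * (n - 1) * 2 ^ n := by
  have hdeg (v) : G.degree v ≤ n := (degree_le_of_le hG).trans (cube_degree_le n v)
  have hcover : G.IsVertexCover {v | G.degree v < n} := by
    intro u v huv
    by_contra! h
    have hu : n ≤ G.degree u := not_lt.1 h.1
    have hv : n ≤ G.degree v := not_lt.1 h.2
    have hu₀ := huv.degree_pos_left
    have hv₀ := huv.degree_pos_right
    exact hfree <| contains_doubleStar_of_lt_degree ((cube_cliqueFree_three n).anti hG) huv
      (by omega) (by omega)
  simpa using mul_card_edgeFinset_le_of_degree_le hdeg hcover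

def extremalGraph : SimpleGraph (Fin 3 → Bool) :=
  (cube 3).deleteEdges ↑({s(![true, false, false], ![true, false, true]),
    s(![false, true, false], ![true, true, false]),
    s(![false, false, true], ![false, true, true])} : Finset (Sym2 (Fin 3 → Bool)))

instance : DecidableRel extremalGraph.Adj :=
  inferInstanceAs (DecidableRel ((cube 3).deleteEdges _).Adj)

lemma ncard_edgeSet_extremalGraph : extremalGraph.edgeSet.ncard = 9 := by
  rw [← coe_edgeFinset, Set.ncard_coe_finset]
  decide

lemma not_contains_extremalGraph_doubleStar : ¬ Contains extremalGraph (doubleStar 2 2) := by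
  intro h
  have : ¬ ∃ u v, extremalGraph.Adj u v ∧ 2 < extremalGraph.degree u ∧
      2 < extremalGraph.degree v := by
    decide
  exact this (exists_adj_lt_degree_of_contains_doubleStar h)

/-- `ex(Q_3, S_{2,2}) = 9`. -/
theorem stmt2 : exQ 3 (doubleStar 2 2) = 9 := by
  refine IsGreatest.csSup_eq ⟨⟨extremalGraph, deleteEdges_le _,
    not_contains_extremalGraph_doubleStar, ncard_edgeSet_extremalGraph⟩, ?_⟩
  rintro m ⟨G, hG, hfree, rfl⟩
  classical
  have := mul_card_edgeFinset_le_of_le_cube hG hfree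
  rw [← coe_edgeFinset, Set.ncard_coe_finset]
  omega
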